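/- Let ψ : ℝ → ℝ be differentiable with ψ' Lipschitz with constant L_R on (−R, R). Let (Ω, μ) be a probability space, c measurable, and for g ∈ L^∞(μ) and r ∈ L²(μ) set dF(g)(r) = ∫ (ψ'(g − c) − 1) r dμ. Then for g, g̃ ∈ L^∞(μ) with ‖g − c‖_∞ < R, ‖g̃ − c‖_∞ < R, and all r ∈ L²(μ): |dF(g̃)(r) − dF(g)(r)| ≤ L_R ‖g̃ − g‖_{L²(μ)} ‖r‖_{L²(μ)}. -/

import Mathlib

/-!
On the ball `‖g - c‖_∞ < R` the function `ψ' - 1` is Lipschitz, hence bounded, so both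
integrals exist and their difference is `∫ (ψ'(g̃ - c) - ψ'(g - c)) r`. Pointwise the integrand is
at most `L_R |g̃ - g| |r|`, and Cauchy–Schwarz bounds the integral of that product.
-/

open MeasureTheory Bornology Metric

open scoped NNReal

theorem LipschitzOnWith.isBounded_image {α β : Type*} [PseudoMetricSpace α]
    [PseudoMetricSpace β] {K : ℝ≥0} {f : α → β} {s : Set α} (hf : LipschitzOnWith K f s)
    (hs : IsBounded s) : IsBounded (f '' s) := by
  obtain ⟨C, hC⟩ := isBounded_iff.1 hs
  refine isBounded_image_iff.2 ⟨K * C, fun x hx y hy => ?_⟩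
  exact (hf.dist_le_mul x hx y hy).trans (by gcongr; exact hC hx hy)

section

variable {Ω : Type*} [MeasurableSpace Ω] {μ : Measure Ω}

theorem integral_abs_mul_abs_le_sqrt_mul_sqrt {f g : Ω → ℝ} (hf : MemLp f 2 μ)
    (hg : MemLp g 2 μ) :
    ∫ ω, |f ω| * |g ω| ∂μ ≤ √(∫ ω, f ω ^ 2 ∂μ) * √(∫ ω, g ω ^ 2 ∂μ) := by
  have h := integral_mul_norm_le_Lp_mul_Lq (μ := μ) Real.HolderConjugate.two_two
    (by simpa using hf) (by simpa using hg)
  rw [Real.sqrt_eq_rpow, Real.sqrt_eq_rpow]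
  simpa only [Real.norm_eq_abs, Real.rpow_two, sq_abs] using h

theorem integrable_comp_mul_of_lipschitzOnWith {K : ℝ≥0} {φ : ℝ → ℝ} {s : Set ℝ}
    (hs : IsBounded s) (hφ : LipschitzOnWith K φ s) (hφm : Measurable φ) {u r : Ω → ℝ}
    (hu : AEMeasurable u μ) (hus : ∀ᵐ ω ∂μ, u ω ∈ s) (hr : Integrable r μ) :
    Integrable (fun ω => φ (u ω) * r ω) μ := by
  obtain ⟨C, hC⟩ := isBounded_iff_forall_norm_le.1 (hφ.isBounded_image hs)
  exact hr.bdd_mul (hφm.comp_aemeasurable hu).aestronglyMeasurable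
    (hus.mono fun ω hω => hC _ (Set.mem_image_of_mem φ hω))

theorem abs_integral_comp_mul_sub_le {K : ℝ≥0} {φ : ℝ → ℝ} {s : Set ℝ}
    (hφ : LipschitzOnWith K φ s) {u v r : Ω → ℝ} (hus : ∀ᵐ ω ∂μ, u ω ∈ s)
    (hvs : ∀ᵐ ω ∂μ, v ω ∈ s) (hu : Integrable (fun ω => φ (u ω) * r ω) μ)
    (hv : Integrable (fun ω => φ (v ω) * r ω) μ) (huv : MemLp (fun ω => u ω - v ω) 2 μ)
    (hr : MemLp r 2 μ) :
    |(∫ ω, φ (u ω) * r ω ∂μ) - ∫ ω, φ (v ω) * r ω ∂μ|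
      ≤ K * √(∫ ω, (u ω - v ω) ^ 2 ∂μ) * √(∫ ω, r ω ^ 2 ∂μ) := by
  have hdom : Integrable (fun ω => K * (|u ω - v ω| * |r ω|)) μ :=
    (huv.norm.integrable_mul hr.norm).const_mul _
  have hpointwise : ∀ᵐ ω ∂μ, ‖φ (u ω) * r ω - φ (v ω) * r ω‖ ≤ K * (|u ω - v ω| * |r ω|) := by
    filter_upwards [hus, hvs] with ω huω hvω
    rw [← sub_mul, norm_mul, ← mul_assoc]
    exact mul_le_mul_of_nonneg_right (hφ.dist_le_mul _ huω _ hvω) (abs_nonneg _)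
  calc |(∫ ω, φ (u ω) * r ω ∂μ) - ∫ ω, φ (v ω) * r ω ∂μ|
      = ‖∫ ω, φ (u ω) * r ω - φ (v ω) * r ω ∂μ‖ := by rw [integral_sub hu hv, Real.norm_eq_abs]
    _ ≤ ∫ ω, K * (|u ω - v ω| * |r ω|) ∂μ := norm_integral_le_of_norm_le hdom hpointwise
    _ = K * ∫ ω, |u ω - v ω| * |r ω| ∂μ := integral_const_mul _ _
    _ ≤ K * √(∫ ω, (u ω - v ω) ^ 2 ∂μ) * √(∫ ω, r ω ^ 2 ∂μ) := by
      rw [mul_assoc]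
      exact mul_le_mul_of_nonneg_left (integral_abs_mul_abs_le_sqrt_mul_sqrt huv hr) K.2

end

theorem stmt7_general {Ω : Type*} [MeasurableSpace Ω] (μ : Measure Ω) [IsProbabilityMeasure μ]
    (ψ : ℝ → ℝ) (R LR : ℝ) (hL : 0 ≤ LR)
    (hlip : ∀ s ∈ Set.Ioo (-R) R, ∀ t ∈ Set.Ioo (-R) R,
      |deriv ψ s - deriv ψ t| ≤ LR * |s - t|)
    (c g g' : Ω → ℝ) (hc : Measurable c) (hg : Measurable g) (hg' : Measurable g')
    (hgb : ∀ᵐ ω ∂μ, |g ω - c ω| < R) (hg'b : ∀ᵐ ω ∂μ, |g' ω - c ω| < R)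
    (r : Ω → ℝ) (hr2 : MemLp r 2 μ) :
    |(∫ ω, (deriv ψ (g' ω - c ω) - 1) * r ω ∂μ)
        - ∫ ω, (deriv ψ (g ω - c ω) - 1) * r ω ∂μ|
      ≤ LR * Real.sqrt (∫ ω, (g' ω - g ω) ^ 2 ∂μ) * Real.sqrt (∫ ω, r ω ^ 2 ∂μ) := by
  have hφ : LipschitzOnWith ⟨LR, hL⟩ (fun x => deriv ψ x - 1) (Set.Ioo (-R) R) :=
    LipschitzOnWith.of_dist_le_mul fun s hs t ht => by
      rw [Real.dist_eq, Real.dist_eq, sub_sub_sub_cancel_right]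
      exact hlip s hs t ht
  have hφm : Measurable fun x => deriv ψ x - 1 := (measurable_deriv ψ).sub_const 1
  have hgc : ∀ᵐ ω ∂μ, g ω - c ω ∈ Set.Ioo (-R) R := hgb.mono fun _ h => abs_lt.1 h
  have hg'c : ∀ᵐ ω ∂μ, g' ω - c ω ∈ Set.Ioo (-R) R := hg'b.mono fun _ h => abs_lt.1 h
  have hr1 : Integrable r μ := hr2.integrable one_le_two
  have hdiff : MemLp (fun ω => (g' ω - c ω) - (g ω - c ω)) 2 μ :=
    (MemLp.of_bound (hg'.sub hc).aestronglyMeasurable R (hg'b.mono fun _ h => h.le)).sub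
      (MemLp.of_bound (hg.sub hc).aestronglyMeasurable R (hgb.mono fun _ h => h.le))
  have key := abs_integral_comp_mul_sub_le hφ hg'c hgc
    (integrable_comp_mul_of_lipschitzOnWith (isBounded_Ioo _ _) hφ hφm (hg'.sub hc).aemeasurable
      hg'c hr1)
    (integrable_comp_mul_of_lipschitzOnWith (isBounded_Ioo _ _) hφ hφm (hg.sub hc).aemeasurable
      hgc hr1)
    hdiff hr2
  simp only [sub_sub_sub_cancel_right] at key
  exact key

/-- Lipschitz continuity of the Gâteaux differential `dF(g)(r) = ∫ (ψ'(g−c) − 1) r dμ`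
on `L^∞`-balls around `c`, with respect to the `L²` norms. -/
theorem stmt7 {Ω : Type*} [MeasurableSpace Ω] (μ : Measure Ω) [IsProbabilityMeasure μ]
    (ψ : ℝ → ℝ) (hψ : Differentiable ℝ ψ) (R LR : ℝ) (hR : 0 < R) (hL : 0 ≤ LR)
    (hlip : ∀ s ∈ Set.Ioo (-R) R, ∀ t ∈ Set.Ioo (-R) R,
      |deriv ψ s - deriv ψ t| ≤ LR * |s - t|)
    (c g g' : Ω → ℝ) (hc : Measurable c) (hg : Measurable g) (hg' : Measurable g')
    (hgb : ∀ᵐ ω ∂μ, |g ω - c ω| < R) (hg'b : ∀ᵐ ω ∂μ, |g' ω - c ω| < R)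
    (r : Ω → ℝ) (hr : Measurable r) (hr2 : MemLp r 2 μ) :
    |(∫ ω, (deriv ψ (g' ω - c ω) - 1) * r ω ∂μ)
        - ∫ ω, (deriv ψ (g ω - c ω) - 1) * r ω ∂μ|
      ≤ LR * Real.sqrt (∫ ω, (g' ω - g ω) ^ 2 ∂μ) * Real.sqrt (∫ ω, r ω ^ 2 ∂μ) :=
  stmt7_general μ ψ R LR hL hlip c g g' hc hg hg' hgb hg'b r hr2
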